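/- Let Ω be a simply connected, proper subdomain of ℂ containing 0 that is circularly symmetric, and let f be a normalized conformal mapping of 𝔻 onto Ω. Then for every r ∈ (0,1), the image f(D(0,r)) of the open disk of centre 0 and radius r under f is a circularly symmetric domain. -/

import Mathlib

/-!
A circularly symmetric domain is mapped into itself by the reflection `σ` in a line `ℝ e^{iα}`,
`0 ≤ α ≤ π`, applied to its points strictly on the side of `i e^{iα}`; conversely, a domain with
this property for the closed side is circularly symmetric. For the Riemann map `f`, let `W ⊆ 𝔻`
be the preimage of the open side. Then `q = conj ∘ f⁻¹ ∘ σ ∘ f` is holomorphic near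
`closure W ∩ 𝔻`, `q 0 = 0`, `|q' 0| = 1`, `|q| < 1`, and `q y = conj y` on `frontier W ∩ 𝔻`,
where `σ` fixes `f y`. The maximum principle for `q z / z` gives `|f⁻¹ (σ (f z))| ≤ |z|`, so
every `f(D(0,r))` inherits the property for the closed side.
-/

open Complex Metric Set

/-- A plane domain `Ω` is circularly symmetric (about `0`) if its intersection with
each circle centred at the origin is empty, the whole circle, or a subarc centred on
the positive real axis: for every `r > 0` and angles `θ, θ'` with `|θ'| ≤ |θ| ≤ π`,
if `r·e^{iθ} ∈ Ω` then `r·e^{iθ'} ∈ Ω`. -/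
def CircularlySymmetric (Ω : Set ℂ) : Prop :=
  ∀ r θ θ' : ℝ, 0 < r → |θ'| ≤ |θ| → |θ| ≤ Real.pi →
    (r : ℂ) * Complex.exp ((θ : ℂ) * Complex.I) ∈ Ω →
    (r : ℂ) * Complex.exp ((θ' : ℂ) * Complex.I) ∈ Ω

open Function Filter Topology ComplexConjugate
open scoped Real

section InjOn

variable {U : Set ℂ} {f : ℂ → ℂ} {z : ℂ}

theorem nhds_le_map_nhds_of_injOn (hU : IsOpen U) (hf : DifferentiableOn ℂ f U)
    (hinj : InjOn f U) (hz : z ∈ U) : 𝓝 (f z) ≤ map f (𝓝 z) := by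
  have hfz := hf.analyticAt (hU.mem_nhds hz)
  refine hfz.eventually_constant_or_nhds_le_map_nhds.resolve_left fun hconst => ?_
  obtain ⟨w, ⟨hfw, hwU⟩, hwz⟩ :=
    ((eventually_nhdsWithin_of_eventually_nhds (s := {z}ᶜ) (hconst.and (hU.mem_nhds hz))).and
      self_mem_nhdsWithin).exists
  exact hwz (hinj hwU hz hfw)

theorem isOpen_image_of_injOn (hU : IsOpen U) (hf : DifferentiableOn ℂ f U) (hinj : InjOn f U) :
    IsOpen (f '' U) := by
  rw [isOpen_iff_mem_nhds]
  rintro _ ⟨z, hz, rfl⟩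
  exact nhds_le_map_nhds_of_injOn hU hf hinj hz (image_mem_map (hU.mem_nhds hz))

theorem eventually_apply_invFunOn_of_injOn (hU : IsOpen U) (hf : DifferentiableOn ℂ f U)
    (hinj : InjOn f U) (hz : z ∈ U) : ∀ᶠ w in 𝓝 (f z), f (invFunOn f U w) = w :=
  eventually_of_mem ((isOpen_image_of_injOn hU hf hinj).mem_nhds (mem_image_of_mem f hz))
    fun _ hw => invFunOn_eq hw

theorem continuousAt_invFunOn_of_injOn (hU : IsOpen U) (hf : DifferentiableOn ℂ f U)
    (hinj : InjOn f U) (hz : z ∈ U) : ContinuousAt (invFunOn f U) (f z) := by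
  have hleft : invFunOn f U ∘ f =ᶠ[𝓝 z] id :=
    eventually_of_mem (hU.mem_nhds hz) fun _ hy => hinj.leftInvOn_invFunOn hy
  rw [ContinuousAt, hinj.leftInvOn_invFunOn hz]
  exact (tendsto_map'_iff.2 (tendsto_id.congr' hleft.symm)).mono_left
    (nhds_le_map_nhds_of_injOn hU hf hinj hz)

theorem eventually_deriv_ne_zero_of_injOn (hU : IsOpen U) (hf : DifferentiableOn ℂ f U)
    (hinj : InjOn f U) (hz : z ∈ U) : ∀ᶠ y in 𝓝[≠] z, deriv f y ≠ 0 := by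
  have hd := (hf.analyticAt (hU.mem_nhds hz)).deriv
  refine hd.eventually_eq_zero_or_eventually_ne_zero.resolve_left fun hzero => ?_
  obtain ⟨ε, hε, hball⟩ := Metric.eventually_nhds_iff_ball.1 (hzero.and (hU.mem_nhds hz))
  obtain ⟨y, hy, hyz⟩ :=
    Filter.nonempty_of_mem (inter_mem (mem_nhdsWithin_of_mem_nhds (ball_mem_nhds z hε))
      (self_mem_nhdsWithin (s := {z}ᶜ)))
  have hfy : f y = f z :=
    isOpen_ball.is_const_of_deriv_eq_zero (convex_ball z ε).isPreconnected
      (hf.mono fun v hv => (hball v hv).2) (fun v hv => (hball v hv).1) hy (mem_ball_self hε)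
  exact hyz (hinj (hball y hy).2 hz hfy)

theorem hasDerivAt_invFunOn_of_injOn (hU : IsOpen U) (hf : DifferentiableOn ℂ f U)
    (hinj : InjOn f U) (hz : z ∈ U) (hz' : deriv f z ≠ 0) :
    HasDerivAt (invFunOn f U) (deriv f z)⁻¹ (f z) := by
  refine .of_local_left_inverse (continuousAt_invFunOn_of_injOn hU hf hinj hz) ?_ hz'
    (eventually_apply_invFunOn_of_injOn hU hf hinj hz)
  rw [hinj.leftInvOn_invFunOn hz]
  exact (hf.differentiableAt (hU.mem_nhds hz)).hasDerivAt

/-- At the isolated zeros of `deriv f` the continuous inverse is holomorphic by the removable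
singularity theorem. -/
theorem differentiableOn_invFunOn_of_injOn (hU : IsOpen U) (hf : DifferentiableOn ℂ f U)
    (hinj : InjOn f U) : DifferentiableOn ℂ (invFunOn f U) (f '' U) := by
  rintro _ ⟨z, hz, rfl⟩
  have hcont := continuousAt_invFunOn_of_injOn hU hf hinj hz
  have hright := eventually_apply_invFunOn_of_injOn hU hf hinj hz
  have hpunct : Tendsto (invFunOn f U) (𝓝[≠] (f z)) (𝓝[≠] z) := by
    refine tendsto_nhdsWithin_iff.2 ⟨?_, ?_⟩
    · have := hcont.tendsto.mono_left (nhdsWithin_le_nhds (s := {f z}ᶜ))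
      rwa [hinj.leftInvOn_invFunOn hz] at this
    · filter_upwards [nhdsWithin_le_nhds hright, self_mem_nhdsWithin] with w hw hwz hφw
      exact hwz (hw ▸ congrArg f hφw)
  refine (analyticAt_of_differentiable_on_punctured_nhds_of_continuousAt ?_
    hcont).differentiableAt.differentiableWithinAt
  filter_upwards [hpunct.eventually ((eventually_deriv_ne_zero_of_injOn hU hf hinj hz).and
      (mem_nhdsWithin_of_mem_nhds (hU.mem_nhds hz))), nhdsWithin_le_nhds hright] with w hw hfw
  rw [← hfw]
  exact (hasDerivAt_invFunOn_of_injOn hU hf hinj hw.2 hw.1).differentiableAt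

theorem deriv_invFunOn_mul_deriv_of_injOn (hU : IsOpen U) (hf : DifferentiableOn ℂ f U)
    (hinj : InjOn f U) (hz : z ∈ U) : deriv (invFunOn f U) (f z) * deriv f z = 1 := by
  have hφ := (differentiableOn_invFunOn_of_injOn hU hf hinj).differentiableAt
    ((isOpen_image_of_injOn hU hf hinj).mem_nhds (mem_image_of_mem f hz))
  have hid : HasDerivAt (invFunOn f U ∘ f) 1 z :=
    (hasDerivAt_id z).congr_of_eventuallyEq
      (eventually_of_mem (hU.mem_nhds hz) fun _ hy => hinj.leftInvOn_invFunOn hy)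
  exact (hφ.hasDerivAt.comp z (hf.differentiableAt (hU.mem_nhds hz)).hasDerivAt).unique hid

end InjOn

theorem ContinuousOn.closure_inter_preimage_Ioi_subset {X : Type*} [TopologicalSpace X]
    {U : Set X} {g : X → ℝ} (hg : ContinuousOn g U) (hU : IsOpen U) :
    closure (U ∩ g ⁻¹' Ioi 0) ∩ U ⊆ g ⁻¹' Ici 0 := fun _ hy =>
  ContinuousWithinAt.closure_le hy.1 continuousWithinAt_const
    (hg.continuousAt (hU.mem_nhds hy.2)).continuousWithinAt fun _ h => h.2.le

theorem ContinuousOn.frontier_inter_preimage_Ioi_subset {X : Type*} [TopologicalSpace X]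
    {U : Set X} {g : X → ℝ} (hg : ContinuousOn g U) (hU : IsOpen U) :
    frontier (U ∩ g ⁻¹' Ioi 0) ∩ U ⊆ g ⁻¹' {0} := by
  rintro y ⟨hy, hyU⟩
  rw [(hg.isOpen_inter_preimage hU isOpen_Ioi).frontier_eq] at hy
  exact (hg.closure_inter_preimage_Ioi_subset hU ⟨hy.1, hyU⟩ : 0 ≤ g y).antisymm'
    (not_lt.1 fun h => hy.2 ⟨hyU, h⟩)

section Schwarz

variable {W O : Set ℂ} {q : ℂ → ℂ} {z : ℂ}

theorem norm_le_norm_div_of_frontier_norm_le (hO : IsOpen O) (h0 : (0 : ℂ) ∈ O)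
    (hWO : closure W ∩ ball 0 1 ⊆ O) (hq : DifferentiableOn ℂ q O) (hq0 : q 0 = 0)
    (hq'0 : ‖deriv q 0‖ ≤ 1) (hle_one : ∀ y ∈ closure W ∩ ball 0 1, ‖q y‖ ≤ 1)
    (hfrontier : ∀ y ∈ frontier W ∩ ball 0 1, ‖q y‖ ≤ ‖y‖) (hz : z ∈ W) (hz0 : z ≠ 0)
    {s : ℝ} (hzs : ‖z‖ < s) (hs1 : s < 1) : ‖q z‖ ≤ ‖z‖ / s := by
  have hs : 0 < s := (norm_nonneg z).trans_lt hzs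
  have hone : 1 ≤ 1 / s := one_le_one_div hs hs1.le
  have hslope : ∀ y ≠ 0, ‖dslope q 0 y‖ = ‖q y‖ / ‖y‖ := fun y hy => by
    rw [dslope_of_ne _ hy, slope_def_field, hq0, sub_zero, sub_zero, norm_div]
  have hcl : closure (W ∩ ball 0 s) ⊆ O :=
    (closure_inter_subset_inter_closure _ _).trans <| by
      rw [closure_ball 0 hs.ne']
      exact (inter_subset_inter_right _ (closedBall_subset_ball hs1)).trans hWO
  have hmax : ‖dslope q 0 z‖ ≤ 1 / s := by
    refine norm_le_of_forall_mem_frontier_norm_le (isBounded_ball.subset inter_subset_right)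
      (((differentiableOn_dslope (hO.mem_nhds h0)).2 hq).mono hcl).diffContOnCl
      (fun y hy => ?_) (subset_closure ⟨hz, mem_ball_zero_iff.2 hzs⟩)
    rcases frontier_inter_subset W (ball 0 s) hy with ⟨hyW, hys⟩ | ⟨hyW, hys⟩
    · rw [closure_ball 0 hs.ne', mem_closedBall_zero_iff] at hys
      have hy1 : y ∈ ball (0 : ℂ) 1 := mem_ball_zero_iff.2 (hys.trans_lt hs1)
      rcases eq_or_ne y 0 with rfl | hy0
      · rw [dslope_same]
        exact hq'0.trans hone
      · rw [hslope y hy0]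
        exact ((div_le_one (norm_pos_iff.2 hy0)).2 (hfrontier y ⟨hyW, hy1⟩)).trans hone
    · rw [frontier_ball 0 hs.ne', mem_sphere_zero_iff_norm] at hys
      have hy0 : y ≠ 0 := by
        rintro rfl
        exact hs.ne (by simpa using hys)
      rw [hslope y hy0, hys]
      gcongr
      exact hle_one y ⟨hyW, mem_ball_zero_iff.2 (hys.trans_lt hs1)⟩
  rw [hslope z hz0, div_le_div_iff₀ (norm_pos_iff.2 hz0) hs] at hmax
  rw [le_div_iff₀ hs]
  linarith

theorem norm_le_norm_of_frontier_norm_le (hO : IsOpen O) (h0 : (0 : ℂ) ∈ O)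
    (hWO : closure W ∩ ball 0 1 ⊆ O) (hq : DifferentiableOn ℂ q O) (hq0 : q 0 = 0)
    (hq'0 : ‖deriv q 0‖ ≤ 1) (hle_one : ∀ y ∈ closure W ∩ ball 0 1, ‖q y‖ ≤ 1)
    (hfrontier : ∀ y ∈ frontier W ∩ ball 0 1, ‖q y‖ ≤ ‖y‖) (hz : z ∈ W ∩ ball 0 1) :
    ‖q z‖ ≤ ‖z‖ := by
  rcases eq_or_ne z 0 with rfl | hz0
  · simp [hq0]
  have hlim : Tendsto (fun s : ℝ => ‖z‖ / s) (𝓝[<] 1) (𝓝 ‖z‖) := by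
    simpa [Pi.div_def] using (continuousAt_const.div continuousAt_id one_ne_zero).tendsto.mono_left
      (nhdsWithin_le_nhds (s := Iio (1 : ℝ)))
  refine ge_of_tendsto hlim (eventually_of_mem (Ioo_mem_nhdsLT (mem_ball_zero_iff.1 hz.2)) ?_)
  exact fun s hs => norm_le_norm_div_of_frontier_norm_le hO h0 hWO hq hq0 hq'0 hle_one hfrontier
    hz.1 hz0 hs.1 hs.2

end Schwarz

/-- The reflection in the line `ℝ e^{iα}`. -/
noncomputable def reflectLine (α : ℝ) (w : ℂ) : ℂ :=
  exp (↑(2 * α) * I) * conj w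

/-- The signed distance of `w` to the line `ℝ e^{iα}`, positive on the side of `i e^{iα}`. -/
noncomputable def imRot (α : ℝ) (w : ℂ) : ℝ :=
  (exp (↑(-α) * I) * w).im

theorem conj_ofReal_mul_exp (ρ θ : ℝ) :
    conj (ρ * exp (θ * I)) = ρ * exp (↑(-θ) * I) := by
  rw [map_mul, conj_ofReal, ← exp_conj, map_mul, conj_ofReal, conj_I]
  push_cast
  ring_nf

theorem reflectLine_ofReal_mul_exp (α ρ θ : ℝ) :
    reflectLine α (ρ * exp (θ * I)) = ρ * exp (↑(2 * α - θ) * I) := by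
  rw [reflectLine, conj_ofReal_mul_exp, mul_left_comm, ← exp_add]
  push_cast
  ring_nf

theorem imRot_ofReal_mul_exp (α ρ θ : ℝ) :
    imRot α (ρ * exp (θ * I)) = ρ * Real.sin (θ - α) := by
  rw [imRot, mul_left_comm, ← exp_add, ← add_mul, ← ofReal_add, im_ofReal_mul,
    exp_ofReal_mul_I_im, neg_add_eq_sub]

theorem reflectLine_pi (w : ℂ) : reflectLine π w = conj w := by
  rw [reflectLine, ofReal_mul, ofReal_ofNat, exp_two_pi_mul_I, one_mul]

theorem reflectLine_zero (α : ℝ) : reflectLine α 0 = 0 := by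
  simp [reflectLine]

theorem reflectLine_eq_self {α : ℝ} {w : ℂ} (h : imRot α w = 0) : reflectLine α w = w := by
  have hconj := conj_eq_iff_im.2 h
  rw [map_mul, ← exp_conj, map_mul, conj_ofReal, conj_I] at hconj
  calc reflectLine α w = exp (↑α * I) * (exp (↑(-α) * -I) * conj w) := by
        rw [reflectLine, ← mul_assoc, ← exp_add]
        push_cast
        ring_nf
    _ = w := by
        rw [hconj, ← mul_assoc, ← exp_add]
        push_cast
        ring_nf
        simp

theorem continuous_reflectLine (α : ℝ) : Continuous (reflectLine α) :=
  continuous_const.mul continuous_conj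

theorem continuous_imRot (α : ℝ) : Continuous (imRot α) :=
  continuous_im.comp (continuous_const.mul continuous_id)

theorem hasDerivAt_conj_comp_reflectLine {g : ℂ → ℂ} {g' : ℂ} {α : ℝ} {w : ℂ}
    (hg : HasDerivAt g g' (reflectLine α w)) :
    HasDerivAt (fun v => conj (g (reflectLine α v))) (conj (g' * exp (↑(2 * α) * I))) w := by
  have hK : HasDerivAt (fun v => g (exp (↑(2 * α) * I) * v)) (g' * exp (↑(2 * α) * I))
      (conj w) :=
    hg.comp (conj w) (hasDerivAt_const_mul _)
  simpa [Function.comp_def, reflectLine] using hK.conj_conj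

theorem exists_abs_le_exp_eq_exp {α Θ : ℝ} (hα0 : 0 ≤ α) (hαπ : α ≤ π)
    (hsin : 0 < Real.sin (Θ - α)) :
    ∃ θ : ℝ, |θ| ≤ |Θ| ∧ exp (↑θ * I) = exp (↑(2 * α - Θ) * I) := by
  rcases lt_or_ge α Θ with hαΘ | hΘα
  · refine ⟨2 * α - Θ, ?_, rfl⟩
    rw [abs_of_pos (hα0.trans_lt hαΘ), abs_le]
    constructor <;> linarith
  · have hΘ : Θ < α - π := by
      by_contra! h
      exact hsin.not_ge (Real.sin_nonpos_of_nonpos_of_neg_pi_le (by linarith) (by linarith))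
    refine ⟨2 * α - Θ - 2 * π, ?_, ?_⟩
    · rw [abs_of_neg (show Θ < 0 by linarith [Real.pi_pos]), abs_le]
      constructor <;> linarith
    · rw [show (↑(2 * α - Θ - 2 * π) : ℂ) * I = ↑(2 * α - Θ) * I - 2 * π * I by push_cast; ring,
        exp_sub, exp_two_pi_mul_I, div_one]

theorem CircularlySymmetric.reflectLine_mem {Ω : Set ℂ} (hcs : CircularlySymmetric Ω) {α : ℝ}
    (hα0 : 0 ≤ α) (hαπ : α ≤ π) {w : ℂ} (hw : w ∈ Ω) (hside : 0 < imRot α w) :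
    reflectLine α w ∈ Ω := by
  have hρ : 0 < ‖w‖ := norm_pos_iff.2 (by rintro rfl; simp [imRot] at hside)
  rw [← norm_mul_exp_arg_mul_I w] at hw hside ⊢
  rw [imRot_ofReal_mul_exp] at hside
  obtain ⟨θ, hθ, hexp⟩ := exists_abs_le_exp_eq_exp hα0 hαπ (pos_of_mul_pos_right hside hρ.le)
  rw [reflectLine_ofReal_mul_exp, ← hexp]
  exact hcs ‖w‖ (arg w) θ hρ hθ (abs_arg_le_pi w) hw

theorem circularlySymmetric_of_reflectLine_mem {Ω : Set ℂ}
    (h : ∀ α : ℝ, 0 ≤ α → α ≤ π → ∀ w ∈ Ω, 0 ≤ imRot α w → reflectLine α w ∈ Ω) :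
    CircularlySymmetric Ω := by
  intro ρ θ θ' hρ hθ' hθ hw
  have hflip : ∀ φ : ℝ, 0 ≤ φ → φ ≤ π → ↑ρ * exp (↑(-φ) * I) ∈ Ω → ↑ρ * exp (↑φ * I) ∈ Ω := by
    intro φ hφ0 hφπ hmem
    have hside : 0 ≤ imRot π (ρ * exp (↑(-φ) * I)) := by
      rw [imRot_ofReal_mul_exp, Real.sin_sub_pi, Real.sin_neg, neg_neg]
      exact mul_nonneg hρ.le (Real.sin_nonneg_of_nonneg_of_le_pi hφ0 hφπ)
    have := h π Real.pi_pos.le le_rfl _ hmem hside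
    rwa [reflectLine_pi, conj_ofReal_mul_exp, neg_neg] at this
  have habsθ : ↑ρ * exp (↑|θ| * I) ∈ Ω := by
    rcases le_or_gt 0 θ with hθ0 | hθ0
    · rwa [abs_of_nonneg hθ0]
    · rw [abs_of_neg hθ0]
      exact hflip (-θ) (by linarith) (by linarith [abs_of_neg hθ0]) (by rwa [neg_neg])
  -- the reflection in the bisector of the directions `|θ|` and `-|θ'|`
  set α := (|θ| - |θ'|) / 2 with hα
  have hside : 0 ≤ imRot α (ρ * exp (↑|θ| * I)) := by
    rw [imRot_ofReal_mul_exp]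
    exact mul_nonneg hρ.le (Real.sin_nonneg_of_nonneg_of_le_pi (by linarith [abs_nonneg θ'])
      (by linarith))
  have hneg : ↑ρ * exp (↑(-|θ'|) * I) ∈ Ω := by
    have := h α (by linarith) (by linarith [abs_nonneg θ']) _ habsθ hside
    rwa [reflectLine_ofReal_mul_exp, show 2 * α - |θ| = -|θ'| by ring] at this
  rcases le_or_gt 0 θ' with hθ'0 | hθ'0
  · rw [abs_of_nonneg hθ'0] at hneg hθ'
    exact hflip θ' hθ'0 (hθ'.trans hθ) hneg
  · rwa [abs_of_neg hθ'0, neg_neg] at hneg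

section Polarization

variable {U : Set ℂ} {f : ℂ → ℂ} {α : ℝ} {z : ℂ}

theorem hasDerivAt_conj_invFunOn_reflectLine (hU : IsOpen U) (hf : DifferentiableOn ℂ f U)
    (hinj : InjOn f U) (hz : z ∈ U) (hmem : reflectLine α (f z) ∈ f '' U) :
    HasDerivAt (fun y => conj (invFunOn f U (reflectLine α (f y))))
      (conj (deriv (invFunOn f U) (reflectLine α (f z)) * exp (↑(2 * α) * I)) * deriv f z)
      z := by
  have hφ := (differentiableOn_invFunOn_of_injOn hU hf hinj).differentiableAt
    ((isOpen_image_of_injOn hU hf hinj).mem_nhds hmem)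
  exact (hasDerivAt_conj_comp_reflectLine hφ.hasDerivAt).comp z
    (hf.differentiableAt (hU.mem_nhds hz)).hasDerivAt

theorem norm_deriv_conj_invFunOn_reflectLine (hU : IsOpen U) (hf : DifferentiableOn ℂ f U)
    (hinj : InjOn f U) (hz : z ∈ U) (hfix : reflectLine α (f z) = f z) :
    ‖deriv (fun y => conj (invFunOn f U (reflectLine α (f y)))) z‖ = 1 := by
  have hmem : reflectLine α (f z) ∈ f '' U := by
    rw [hfix]
    exact mem_image_of_mem f hz
  rw [(hasDerivAt_conj_invFunOn_reflectLine hU hf hinj hz hmem).deriv,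
    norm_mul, norm_conj, norm_mul, norm_exp_ofReal_mul_I, mul_one, hfix, ← norm_mul,
    deriv_invFunOn_mul_deriv_of_injOn hU hf hinj hz, norm_one]

theorem norm_invFunOn_reflectLine_le (hf : DifferentiableOn ℂ f (ball 0 1))
    (hinj : InjOn f (ball 0 1)) (hf0 : f 0 = 0)
    (hpol : ∀ w ∈ f '' ball 0 1, 0 < imRot α w → reflectLine α w ∈ f '' ball 0 1)
    (hz : z ∈ ball (0 : ℂ) 1) (hside : 0 < imRot α (f z)) :
    ‖invFunOn f (ball 0 1) (reflectLine α (f z))‖ ≤ ‖z‖ := by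
  have h0 : (0 : ℂ) ∈ ball 0 1 := mem_ball_self one_pos
  have hcont : ContinuousOn (fun y => imRot α (f y)) (ball 0 1) :=
    (continuous_imRot α).comp_continuousOn hf.continuousOn
  set O := ball 0 1 ∩ (fun y => reflectLine α (f y)) ⁻¹' (f '' ball 0 1)
  have hO : IsOpen O :=
    ((continuous_reflectLine α).comp_continuousOn hf.continuousOn).isOpen_inter_preimage
      isOpen_ball (isOpen_image_of_injOn isOpen_ball hf hinj)
  have h0O : (0 : ℂ) ∈ O :=
    ⟨h0, by simpa [hf0, reflectLine_zero] using mem_image_of_mem f h0⟩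
  have hWO : closure (ball 0 1 ∩ (fun y => imRot α (f y)) ⁻¹' Ioi 0) ∩ ball 0 1 ⊆ O := by
    intro y hy
    refine ⟨hy.2, ?_⟩
    have hnonneg : 0 ≤ imRot α (f y) := hcont.closure_inter_preimage_Ioi_subset isOpen_ball hy
    rcases hnonneg.eq_or_lt with h | h
    · simpa only [mem_preimage, reflectLine_eq_self h.symm] using mem_image_of_mem f hy.2
    · exact hpol _ (mem_image_of_mem f hy.2) h
  have hmain := norm_le_norm_of_frontier_norm_le hO h0O hWO
    (fun y hy => (hasDerivAt_conj_invFunOn_reflectLine isOpen_ball hf hinj hy.1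
      hy.2).differentiableAt.differentiableWithinAt)
    (by simpa [hf0, reflectLine_zero] using hinj.leftInvOn_invFunOn h0)
    (norm_deriv_conj_invFunOn_reflectLine isOpen_ball hf hinj h0
      (by rw [hf0, reflectLine_zero])).le
    (fun y hy => by simpa using (mem_ball_zero_iff.1 (invFunOn_mem (hWO hy).2)).le)
    (fun y hy => by
      simp [reflectLine_eq_self (hcont.frontier_inter_preimage_Ioi_subset isOpen_ball hy),
        hinj.leftInvOn_invFunOn hy.2])
    ⟨⟨hz, hside⟩, hz⟩
  simpa using hmain

theorem exists_norm_le_of_reflectLine (hf : DifferentiableOn ℂ f (ball 0 1))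
    (hinj : InjOn f (ball 0 1)) (hf0 : f 0 = 0)
    (hpol : ∀ w ∈ f '' ball 0 1, 0 < imRot α w → reflectLine α w ∈ f '' ball 0 1)
    (hz : z ∈ ball (0 : ℂ) 1) (hside : 0 ≤ imRot α (f z)) :
    ∃ z' ∈ ball (0 : ℂ) 1, ‖z'‖ ≤ ‖z‖ ∧ f z' = reflectLine α (f z) := by
  rcases hside.eq_or_lt with hside | hside
  · exact ⟨z, hz, le_rfl, (reflectLine_eq_self hside.symm).symm⟩
  have hmem := hpol _ (mem_image_of_mem f hz) hside
  exact ⟨_, invFunOn_mem hmem, norm_invFunOn_reflectLine_le hf hinj hf0 hpol hz hside,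
    invFunOn_eq hmem⟩

end Polarization

theorem image_of_subdisk_circsym_general
    (Ω : Set ℂ) (hcs : CircularlySymmetric Ω)
    (f : ℂ → ℂ) (hf : DifferentiableOn ℂ f (ball (0 : ℂ) 1))
    (hinj : InjOn f (ball (0 : ℂ) 1)) (himg : f '' ball (0 : ℂ) 1 = Ω)
    (hf0 : f 0 = 0) :
    ∀ r : ℝ, r ∈ Ioo (0 : ℝ) 1 →
      IsOpen (f '' ball (0 : ℂ) r) ∧ IsConnected (f '' ball (0 : ℂ) r) ∧
      CircularlySymmetric (f '' ball (0 : ℂ) r) := by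
  subst himg
  rintro r ⟨hr0, hr1⟩
  have hsub : ball (0 : ℂ) r ⊆ ball 0 1 := ball_subset_ball hr1.le
  refine ⟨isOpen_image_of_injOn isOpen_ball (hf.mono hsub) (hinj.mono hsub),
    (isConnected_ball hr0).image f (hf.continuousOn.mono hsub), ?_⟩
  refine circularlySymmetric_of_reflectLine_mem fun α hα0 hαπ => ?_
  rintro _ ⟨z, hz, rfl⟩ hside
  obtain ⟨z', -, hle, hfz'⟩ := exists_norm_le_of_reflectLine hf hinj hf0
    (fun _ hw => hcs.reflectLine_mem hα0 hαπ hw) (hsub hz) hside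
  exact ⟨z', mem_ball_zero_iff.2 (hle.trans_lt (mem_ball_zero_iff.1 hz)), hfz'⟩

/-- Lemma 3.3 (Jenkins): if `Ω` is a circularly symmetric, simply connected, proper
subdomain of `ℂ` containing `0` and `f` is its normalized Riemann map, then `f` maps
each disk `D(0,r)`, `0 < r < 1`, onto a circularly symmetric domain. -/
theorem image_of_subdisk_circsym
    (Ω : Set ℂ) (hΩopen : IsOpen Ω) (hΩconn : IsConnected Ω)
    (hΩsc : SimplyConnectedSpace Ω) (hΩne : Ω ≠ univ) (hΩ0 : (0 : ℂ) ∈ Ω)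
    (hcs : CircularlySymmetric Ω)
    (f : ℂ → ℂ) (hf : DifferentiableOn ℂ f (ball (0 : ℂ) 1))
    (hinj : InjOn f (ball (0 : ℂ) 1)) (himg : f '' ball (0 : ℂ) 1 = Ω)
    (hf0 : f 0 = 0) (hf'0 : (deriv f 0).im = 0 ∧ 0 < (deriv f 0).re) :
    ∀ r : ℝ, r ∈ Ioo (0 : ℝ) 1 →
      IsOpen (f '' ball (0 : ℂ) r) ∧ IsConnected (f '' ball (0 : ℂ) r) ∧
      CircularlySymmetric (f '' ball (0 : ℂ) r) :=
  image_of_subdisk_circsym_general Ω hcs f hf hinj himg hf0
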